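/- arXiv:2310.00404 — 7 statements merged into one kernel-verified Lean document; each statement's English description precedes it below -/
import Mathlib

section
/- Let Y be a nonnegative real-valued random variable and J an exponentially distributed random variable with rate λ > 0, with Y and J independent. Then for every real s ≥ 0 with s ≠ λ, E[exp(−s·max(Y − J, 0))] = (λ/(λ − s))·E[exp(−s·Y)] − (s/(λ − s))·E[exp(−λ·Y)]. -/
/-!
Conditionally on `Y = y ≥ 0`, the expectation `E[exp(-s (y - J)⁺)]` is an elementary integral
against the exponential density: `J ≤ y` contributes `l e^{-sy} ∫₀^y e^{(s-l)j} dj` and `J > y`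
contributes `P(J > y) = e^{-ly}`. The result is affine in `e^{-sy}` and `e^{-ly}`, so integrating
over the law of `Y`, which independence allows via Fubini, gives the formula.
-/

open MeasureTheory ProbabilityTheory Real Set

lemma integrable_exp_neg_mul_of_nonneg {α : Type*} [MeasurableSpace α] {μ : Measure α}
    [IsFiniteMeasure μ] {f : α → ℝ} (hf : AEStronglyMeasurable f μ) (hf₀ : ∀ x, 0 ≤ f x)
    {c : ℝ} (hc : 0 ≤ c) : Integrable (fun x ↦ exp (-c * f x)) μ := by
  refine .of_bound (continuous_exp.comp_aestronglyMeasurable (hf.const_mul (-c))) 1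
    (.of_forall fun x ↦ ?_)
  rw [norm_of_nonneg (exp_pos _).le, exp_le_one_iff, neg_mul, neg_nonpos]
  exact mul_nonneg hc (hf₀ x)

theorem ProbabilityTheory.IndepFun.integral_comp_eq_integral_integral {Ω α β E : Type*}
    [MeasurableSpace Ω] [MeasurableSpace α] [MeasurableSpace β]
    [NormedAddCommGroup E] [NormedSpace ℝ E]
    {μ : Measure Ω} [IsFiniteMeasure μ] {X : Ω → α} {Y : Ω → β} (hXY : IndepFun X Y μ)
    (hX : AEMeasurable X μ) (hY : AEMeasurable Y μ) {f : α × β → E}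
    (hf : Integrable f ((μ.map X).prod (μ.map Y))) :
    ∫ ω, f (X ω, Y ω) ∂μ = ∫ ω, ∫ y, f (X ω, y) ∂(μ.map Y) ∂μ := by
  have hXY' := hXY.map_prod_eq_prod_map_map hX hY
  rw [← integral_map (hX.prodMk hY) (hXY' ▸ hf.aestronglyMeasurable), hXY', integral_prod _ hf,
    integral_map hX hf.integral_prod_left.aestronglyMeasurable]

lemma integral_expMeasure {l : ℝ} (hl : 0 < l) (f : ℝ → ℝ) :
    ∫ x, f x ∂expMeasure l = ∫ x in Ioi 0, l * exp (-l * x) * f x := by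
  have hpdf (x : ℝ) :
      (gammaPDF 1 l x).toReal = (Ici 0).indicator (fun x ↦ l * exp (-l * x)) x := by
    rw [gammaPDF, ENNReal.toReal_ofReal (gammaPDFReal_nonneg one_pos hl x)]
    simp [gammaPDFReal, indicator_apply]
  rw [expMeasure, gammaMeasure, integral_withDensity_eq_integral_toReal_smul (f := gammaPDF 1 l)
    (measurable_gammaPDFReal 1 l).ennreal_ofReal (.of_forall fun _ ↦ ENNReal.ofReal_lt_top)]
  simp_rw [hpdf, smul_eq_mul, ← indicator_mul_left]
  rw [integral_indicator measurableSet_Ici, integral_Ici_eq_integral_Ioi]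

lemma integral_expMeasure_exp_neg_mul_max_sub {l s y : ℝ} (hl : 0 < l) (hsl : s ≠ l)
    (hy : 0 ≤ y) :
    ∫ j, exp (-s * max (y - j) 0) ∂expMeasure l
      = l / (l - s) * exp (-s * y) - s / (l - s) * exp (-l * y) := by
  set g := fun x ↦ l * exp (-l * x) * exp (-s * max (y - x) 0)
  have hg_Ioc : EqOn g (fun x ↦ l * exp (-s * y) * exp ((s - l) * x)) (Ioc 0 y) := by
    intro x hx
    simp only [g, max_eq_left (sub_nonneg.2 hx.2), mul_assoc, ← exp_add]
    ring_nf
  have hg_Ioi : EqOn g (fun x ↦ l * exp (-l * x)) (Ioi y) := by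
    intro x hx
    simp [g, max_eq_right (sub_nonpos.2 (le_of_lt (mem_Ioi.1 hx)))]
  have hint_Ioi : IntegrableOn (fun x ↦ l * exp (-l * x)) (Ioi y) :=
    (integrableOn_exp_mul_Ioi (neg_neg_of_pos hl) y).const_mul l
  have hsl' : s - l ≠ 0 := sub_ne_zero.2 hsl
  have hexp : ∫ x in 0..y, exp ((s - l) * x) = (exp ((s - l) * y) - 1) / (s - l) := by
    rw [intervalIntegral.integral_comp_mul_left (fun x ↦ exp x) hsl', integral_exp, mul_zero,
      exp_zero, smul_eq_mul, inv_mul_eq_div]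
  rw [integral_expMeasure hl, ← Ioc_union_Ioi_eq_Ioi hy,
    setIntegral_union (Ioc_disjoint_Ioi le_rfl) measurableSet_Ioi
      (by fun_prop : Continuous g).integrableOn_Ioc
      (hint_Ioi.congr_fun hg_Ioi.symm measurableSet_Ioi),
    setIntegral_congr_fun measurableSet_Ioc hg_Ioc, setIntegral_congr_fun measurableSet_Ioi hg_Ioi,
    integral_const_mul, integral_const_mul, integral_exp_mul_Ioi (neg_neg_of_pos hl),
    ← intervalIntegral.integral_of_le hy, hexp]
  rw [show exp ((s - l) * y) = exp (-l * y) / exp (-s * y) by rw [← exp_sub]; ring_nf]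
  have hls : l - s ≠ 0 := sub_ne_zero.2 hsl.symm
  field_simp
  ring

/-- If `Y` is a nonnegative random variable and `J` is exponentially
distributed with rate `l > 0`, with `Y` and `J` independent, then for every `s ≥ 0` with
`s ≠ l`, `E[exp(-s·max(Y - J, 0))] = (l/(l-s))·E[exp(-s·Y)] - (s/(l-s))·E[exp(-l·Y)]`. -/
theorem lst_of_pos_part_minus_exponential
    {Ω : Type*} [MeasurableSpace Ω] (P : Measure Ω) [IsProbabilityMeasure P]
    (Y J : Ω → ℝ) (hYm : Measurable Y) (hJm : Measurable J)
    (hYnonneg : ∀ ω, 0 ≤ Y ω)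
    (l : ℝ) (hl : 0 < l)
    (hJlaw : Measure.map J P = expMeasure l)
    (hindep : IndepFun Y J P)
    (s : ℝ) (hs : 0 ≤ s) (hsl : s ≠ l) :
    ∫ ω, Real.exp (-s * max (Y ω - J ω) 0) ∂P
      = (l / (l - s)) * (∫ ω, Real.exp (-s * Y ω) ∂P)
        - (s / (l - s)) * (∫ ω, Real.exp (-l * Y ω) ∂P) := by
  have hint (c : ℝ) (hc : 0 ≤ c) : Integrable (fun ω ↦ exp (-c * Y ω)) P :=
    integrable_exp_neg_mul_of_nonneg hYm.aestronglyMeasurable hYnonneg hc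
  calc ∫ ω, exp (-s * max (Y ω - J ω) 0) ∂P
      = ∫ ω, ∫ j, exp (-s * max (Y ω - j) 0) ∂expMeasure l ∂P := by
        rw [← hJlaw]
        exact hindep.integral_comp_eq_integral_integral hYm.aemeasurable hJm.aemeasurable
          (f := fun p ↦ exp (-s * max (p.1 - p.2) 0))
          (integrable_exp_neg_mul_of_nonneg (by fun_prop) (fun _ ↦ le_max_right _ _) hs)
    _ = ∫ ω, (l / (l - s) * exp (-s * Y ω) - s / (l - s) * exp (-l * Y ω)) ∂P :=
        integral_congr_ae (.of_forall fun ω ↦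
          integral_expMeasure_exp_neg_mul_max_sub hl hsl (hYnonneg ω))
    _ = _ := by
        rw [integral_sub ((hint s hs).const_mul _) ((hint l hl.le).const_mul _),
          integral_const_mul, integral_const_mul]
end

section
/- Let Y be a nonnegative real-valued random variable and J an exponentially distributed random variable with rate λ > 0, with Y and J independent. Then for every real s with 0 ≤ s < λ, E[exp(−s·min(Y − J, 0))] = 1 + (s/(λ − s))·P(Y < J). -/
/-!
Conditionally on `Y = y ≥ 0`, the integrand is `1` on `{J ≤ y}` and `exp (s (J - y))` on
`{J > y}`. Tilting the exponential law by `exp (s j)` gives `l / (l - s)` times the exponential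
law of rate `l - s`, so the second part contributes `l / (l - s) · P(J > y)`. Since
`l / (l - s) = 1 + s / (l - s)`, the conditional expectation is `1 + s / (l - s) · P(J > y)`,
and integrating over `y` turns `P(J > y)` into `P(Y < J)`.
-/

open MeasureTheory ProbabilityTheory Real

open Set ENNReal

namespace ProbabilityTheory

section Independence

variable {Ω : Type*} [MeasurableSpace Ω] {P : Measure Ω} [IsFiniteMeasure P]

theorem IndepFun.lintegral_comp_prodMk_eq {α β : Type*} [MeasurableSpace α] [MeasurableSpace β]
    {X : Ω → α} {Z : Ω → β} (hXZ : IndepFun X Z P) (hX : Measurable X) (hZ : Measurable Z)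
    {f : α × β → ℝ≥0∞} (hf : Measurable f) :
    ∫⁻ ω, f (X ω, Z ω) ∂P = ∫⁻ ω, ∫⁻ z, f (X ω, z) ∂(P.map Z) ∂P := by
  rw [← lintegral_map hf (hX.prodMk hZ),
    hXZ.map_prod_eq_prod_map_map hX.aemeasurable hZ.aemeasurable,
    lintegral_prod _ hf.aemeasurable, lintegral_map hf.lintegral_prod_right' hX]

theorem IndepFun.measure_lt_eq_lintegral {X Z : Ω → ℝ} (hXZ : IndepFun X Z P) (hX : Measurable X)
    (hZ : Measurable Z) :
    P {ω | X ω < Z ω} = ∫⁻ ω, P.map Z (Ioi (X ω)) ∂P := by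
  have hlt : MeasurableSet {p : ℝ × ℝ | p.1 < p.2} :=
    measurableSet_lt measurable_fst measurable_snd
  calc P {ω | X ω < Z ω} = P.map (fun ω => (X ω, Z ω)) {p : ℝ × ℝ | p.1 < p.2} := by
        rw [Measure.map_apply (hX.prodMk hZ) hlt]; rfl
    _ = ∫⁻ x, P.map Z (Ioi x) ∂(P.map X) := by
        rw [hXZ.map_prod_eq_prod_map_map hX.aemeasurable hZ.aemeasurable,
          Measure.prod_apply hlt]
        rfl
    _ = ∫⁻ ω, P.map Z (Ioi (X ω)) ∂P :=
        lintegral_map (measurable_measure_prodMk_left hlt) hX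

end Independence

section ExponentialLaw

variable {l s : ℝ}

theorem exponentialPDF_mul_exp (hsl : s < l) (j : ℝ) :
    exponentialPDF l j * ENNReal.ofReal (exp (s * j))
      = ENNReal.ofReal (l / (l - s)) * exponentialPDF (l - s) j := by
  have hls : 0 < l - s := sub_pos.mpr hsl
  simp only [exponentialPDF_eq]
  split_ifs
  · rw [← ENNReal.ofReal_mul' (exp_nonneg _), ← ENNReal.ofReal_mul' (by positivity),
      ← mul_assoc, div_mul_cancel₀ _ hls.ne', mul_assoc, ← exp_add]
    ring_nf
  · simp

theorem expMeasure_withDensity_exp (hsl : s < l) :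
    (expMeasure l).withDensity (fun j => ENNReal.ofReal (exp (s * j)))
      = ENNReal.ofReal (l / (l - s)) • expMeasure (l - s) := by
  have hpdf (r : ℝ) : Measurable (exponentialPDF r) :=
    (measurable_exponentialPDFReal r).ennreal_ofReal
  change (volume.withDensity (exponentialPDF l)).withDensity _
    = _ • volume.withDensity (exponentialPDF (l - s))
  rw [← withDensity_mul _ (hpdf l) (by fun_prop), ← withDensity_smul _ (hpdf (l - s))]
  congr 1
  funext j
  exact exponentialPDF_mul_exp hsl j

theorem expMeasure_Ioi (hl : 0 < l) {y : ℝ} (hy : 0 ≤ y) :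
    expMeasure l (Ioi y) = ENNReal.ofReal (exp (-(l * y))) := by
  have := isProbabilityMeasure_expMeasure hl
  have hexp : exp (-(l * y)) ≤ 1 := exp_le_one_iff.mpr (by nlinarith)
  rw [← compl_Iic, prob_compl_eq_one_sub measurableSet_Iic, expMeasure, gammaMeasure,
    withDensity_apply _ measurableSet_Iic]
  change 1 - ∫⁻ x in Iic y, exponentialPDF l x = _
  rw [lintegral_exponentialPDF_eq_antiDeriv hl, if_pos hy, ← ENNReal.ofReal_one,
    ← ENNReal.ofReal_sub _ (sub_nonneg.mpr hexp), sub_sub_cancel (1 : ℝ)]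

theorem setLIntegral_Ioi_exp_expMeasure (hl : 0 < l) (hsl : s < l) {y : ℝ} (hy : 0 ≤ y) :
    ∫⁻ j in Ioi y, ENNReal.ofReal (exp (s * (j - y))) ∂expMeasure l
      = ENNReal.ofReal (l / (l - s)) * expMeasure l (Ioi y) := by
  have hexp (j : ℝ) : ENNReal.ofReal (exp (s * (j - y)))
      = ENNReal.ofReal (exp (-(s * y))) * ENNReal.ofReal (exp (s * j)) := by
    rw [← ENNReal.ofReal_mul (exp_nonneg _), ← exp_add]
    ring_nf
  simp_rw [hexp]
  rw [lintegral_const_mul _ (by fun_prop), ← withDensity_apply _ measurableSet_Ioi,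
    expMeasure_withDensity_exp hsl, Measure.smul_apply, smul_eq_mul,
    expMeasure_Ioi (sub_pos.mpr hsl) hy, expMeasure_Ioi hl hy, mul_left_comm,
    ← ENNReal.ofReal_mul (exp_nonneg _), ← exp_add]
  ring_nf

theorem lintegral_exp_neg_min_sub_expMeasure (hl : 0 < l) (hs0 : 0 ≤ s) (hsl : s < l)
    {y : ℝ} (hy : 0 ≤ y) :
    ∫⁻ j, ENNReal.ofReal (exp (-s * min (y - j) 0)) ∂expMeasure l
      = 1 + ENNReal.ofReal (s / (l - s)) * expMeasure l (Ioi y) := by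
  have hls : 0 < l - s := sub_pos.mpr hsl
  have := isProbabilityMeasure_expMeasure hl
  have hfactor : ENNReal.ofReal (l / (l - s)) = 1 + ENNReal.ofReal (s / (l - s)) := by
    rw [← ENNReal.ofReal_one, ← ENNReal.ofReal_add zero_le_one (by positivity)]
    congr 1
    field_simp
    ring
  have hright : EqOn (fun j => ENNReal.ofReal (exp (-s * min (y - j) 0)))
      (fun j => ENNReal.ofReal (exp (s * (j - y)))) (Ioi y) := fun j (hj : y < j) => by
    simp only [min_eq_left (by linarith : y - j ≤ 0)]
    ring_nf
  have hleft : EqOn (fun j => ENNReal.ofReal (exp (-s * min (y - j) 0))) 1 (Ioi y)ᶜ :=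
    fun j (hj : ¬y < j) => by simp [min_eq_right (sub_nonneg.mpr (not_lt.mp hj))]
  rw [← lintegral_add_compl _ measurableSet_Ioi, setLIntegral_congr_fun measurableSet_Ioi hright,
    setLIntegral_congr_fun measurableSet_Ioi.compl hleft, setLIntegral_Ioi_exp_expMeasure hl hsl hy,
    Pi.one_def, setLIntegral_one, hfactor, add_mul, one_mul, add_right_comm,
    measure_add_measure_compl measurableSet_Ioi, measure_univ]

end ExponentialLaw

end ProbabilityTheory

/-- If `Y` is a nonnegative random variable and `J` is exponentially
distributed with rate `l > 0`, independent of `Y`, then for every `0 ≤ s < l`,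
`E[exp(-s·min(Y - J, 0))] = 1 + (s/(l-s))·P(Y < J)`. -/
theorem lst_of_neg_part_minus_exponential
    {Ω : Type*} [MeasurableSpace Ω] (P : Measure Ω) [IsProbabilityMeasure P]
    (Y J : Ω → ℝ) (hYm : Measurable Y) (hJm : Measurable J)
    (hYnonneg : ∀ ω, 0 ≤ Y ω)
    (l : ℝ) (hl : 0 < l)
    (hJlaw : Measure.map J P = expMeasure l)
    (hindep : IndepFun Y J P)
    (s : ℝ) (hs0 : 0 ≤ s) (hsl : s < l) :
    ∫ ω, Real.exp (-s * min (Y ω - J ω) 0) ∂P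
      = 1 + (s / (l - s)) * (P {ω | Y ω < J ω}).toReal := by
  -- Working in `ℝ≥0∞` lets Tonelli run before integrability of the unbounded integrand is known.
  have hlintegral : ∫⁻ ω, ENNReal.ofReal (exp (-s * min (Y ω - J ω) 0)) ∂P
      = 1 + ENNReal.ofReal (s / (l - s)) * P {ω | Y ω < J ω} := by
    rw [hindep.lintegral_comp_prodMk_eq hYm hJm
        (f := fun p => ENNReal.ofReal (exp (-s * min (p.1 - p.2) 0))) (by fun_prop),
      hindep.measure_lt_eq_lintegral hYm hJm, hJlaw]
    simp_rw [lintegral_exp_neg_min_sub_expMeasure hl hs0 hsl (hYnonneg _)]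
    rw [lintegral_add_left measurable_const, lintegral_const, measure_univ, one_mul,
      lintegral_const_mul' _ _ ofReal_ne_top]
  rw [integral_eq_lintegral_of_nonneg_ae (ae_of_all _ fun _ => exp_nonneg _) (by fun_prop),
    hlintegral, toReal_add one_ne_top (mul_ne_top ofReal_ne_top (measure_ne_top _ _)),
    toReal_mul, toReal_ofReal (div_nonneg hs0 (sub_nonneg.mpr hsl.le)), toReal_one]
end

section
/- Let a ∈ (0,1), s₀ ∈ ℂ, and let Z, H, L : ℂ → ℂ be functions such that Z(aⁿ·s₀) = H(aⁿ·s₀)·Z(a^{n+1}·s₀) + L(aⁿ·s₀) for every n ≥ 0, Z is continuous at 0, and Z(0) = 1. If the partial products P_n := ∏_{j=0}^{n−1} H(a^j·s₀) converge to a limit P as n → ∞, then the series Σ_{n=0}^∞ L(aⁿ·s₀)·P_n converges and Z(s₀) = Σ_{n=0}^∞ L(aⁿ·s₀)·P_n + P. -/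
/-!
Unrolling the recurrence `N` times gives the exact identity
`∑_{n<N} L(aⁿs₀) Pₙ = Z(s₀) - P_N · Z(a^N s₀)`.
Since `a^N s₀ → 0` and `Z` is continuous at `0` with `Z(0) = 1`, the right-hand side tends
to `Z(s₀) - P`.
-/

open Filter Finset Topology

section Recurrence

variable {R : Type*} [CommRing R] (z h l : ℕ → R)

theorem sum_mul_prod_eq_sub_of_recurrence (hrec : ∀ n, z n = h n * z (n + 1) + l n) (N : ℕ) :
    ∑ n ∈ range N, l n * ∏ j ∈ range n, h j = z 0 - (∏ j ∈ range N, h j) * z N := by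
  induction N with
  | zero => simp
  | succ N ih =>
    rw [sum_range_succ, prod_range_succ, ih, hrec N]
    ring

theorem tendsto_sum_mul_prod_of_recurrence [TopologicalSpace R] [IsTopologicalRing R] {P : R}
    (hrec : ∀ n, z n = h n * z (n + 1) + l n) (hz : Tendsto z atTop (𝓝 1))
    (hP : Tendsto (fun n => ∏ j ∈ range n, h j) atTop (𝓝 P)) :
    Tendsto (fun N => ∑ n ∈ range N, l n * ∏ j ∈ range n, h j) atTop (𝓝 (z 0 - P)) := by
  simp_rw [sum_mul_prod_eq_sub_of_recurrence z h l hrec]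
  simpa using (hP.mul hz).const_sub (z 0)

end Recurrence

theorem tendsto_pow_mul_nhds_zero_of_norm_lt_one {R : Type*} [NormedRing R] {a : R}
    (ha : ‖a‖ < 1) (s : R) : Tendsto (fun n : ℕ => a ^ n * s) atTop (𝓝 0) := by
  simpa using (tendsto_pow_atTop_nhds_zero_of_norm_lt_one ha).mul_const s

/-- If `Z(aⁿs₀) = H(aⁿs₀)·Z(aⁿ⁺¹s₀) + L(aⁿs₀)` for all `n`, `Z` is
continuous at `0` with `Z(0) = 1`, and the partial products `Pₙ = ∏_{j<n} H(aʲs₀)`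
converge to `P`, then the series `Σₙ L(aⁿs₀)·Pₙ` converges and
`Z(s₀) = Σₙ L(aⁿs₀)·Pₙ + P`, i.e. the partial sums tend to `Z(s₀) - P`. -/
theorem iterated_functional_equation_sum
    (a : ℝ) (ha : a ∈ Set.Ioo (0 : ℝ) 1) (s₀ P : ℂ) (Z H L : ℂ → ℂ)
    (hrec : ∀ n : ℕ,
      Z ((a : ℂ) ^ n * s₀) = H ((a : ℂ) ^ n * s₀) * Z ((a : ℂ) ^ (n + 1) * s₀)
        + L ((a : ℂ) ^ n * s₀))
    (hcont : ContinuousAt Z 0) (hZ0 : Z 0 = 1)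
    (hP : Tendsto (fun n => ∏ j ∈ range n, H ((a : ℂ) ^ j * s₀)) atTop (nhds P)) :
    Tendsto
      (fun N => ∑ n ∈ range N, L ((a : ℂ) ^ n * s₀) * ∏ j ∈ range n, H ((a : ℂ) ^ j * s₀))
      atTop (nhds (Z s₀ - P)) := by
  have ha_norm : ‖(a : ℂ)‖ < 1 := by
    rw [Complex.norm_real, Real.norm_of_nonneg ha.1.le]
    exact ha.2
  have hZ : Tendsto (fun n : ℕ => Z ((a : ℂ) ^ n * s₀)) atTop (𝓝 1) :=
    hZ0 ▸ hcont.tendsto.comp (tendsto_pow_mul_nhds_zero_of_norm_lt_one ha_norm s₀)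
  simpa using tendsto_sum_mul_prod_of_recurrence (fun n => Z ((a : ℂ) ^ n * s₀))
    (fun n => H ((a : ℂ) ^ n * s₀)) (fun n => L ((a : ℂ) ^ n * s₀)) hrec hZ hP
end

section
/- Let a₀, a₁ ∈ (0,1), s₀ ∈ ℂ, and let Z, h₀, h₁, L : ℂ → ℂ satisfy Z(u) = h₀(u)·Z(a₀·u) + h₁(u)·Z(a₁·u) + L(u) for every u in the set {a₀^k·a₁^m·s₀ : k, m ≥ 0}. Define K_{k,m}(s₀) for integers k, m ≥ 0 by K_{0,0}(s₀) = 1, K_{k,m}(s₀) = 0 if k < 0 or m < 0, and K_{k,m}(s₀) = K_{k−1,m}(s₀)·h₀(a₀^{k−1}·a₁^m·s₀) + K_{k,m−1}(s₀)·h₁(a₀^k·a₁^{m−1}·s₀) for (k,m) ≠ (0,0). Then for every integer n ≥ 0: Z(s₀) = Σ_{k=0}^n K_{k,n−k}(s₀)·Z(a₀^k·a₁^{n−k}·s₀) + Σ_{i=0}^{n−1} Σ_{k=0}^i K_{k,i−k}(s₀)·L(a₀^k·a₁^{i−k}·s₀). -/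
/-!
Substituting the functional equation into every term of the level-`n` sum
`∑_{k+m=n} K k m · Z(a₀ᵏa₁ᵐs₀)` sends the weight at `(k,m)` along the two unit steps to
`(k+1,m)` and `(k,m+1)`, multiplied by `h₀` resp. `h₁`, and leaves `K k m · L(a₀ᵏa₁ᵐs₀)` behind.
The weight collected at a point of level `n+1` is the right-hand side of the recursion for `K`,
so the level-`n` sum equals the level-`(n+1)` sum plus the level-`n` sum of the `L` terms;
induction on `n` gives the identity.
-/

open Finset

namespace LatticePathWeight

variable {R : Type*} [Semiring R]

/-- The `if`s stand for the convention `K k m = 0` at negative indices. -/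
def Recursion (p q K : ℕ → ℕ → R) : Prop :=
  ∀ k m, (k, m) ≠ (0, 0) →
    K k m = (if k = 0 then 0 else K (k - 1) m * p (k - 1) m)
      + (if m = 0 then 0 else K k (m - 1) * q k (m - 1))

variable {p q K : ℕ → ℕ → R}

theorem sum_antidiagonal_succ_mul (hK : Recursion p q K) (z : ℕ → ℕ → R) (n : ℕ) :
    ∑ x ∈ antidiagonal (n + 1), K x.1 x.2 * z x.1 x.2
      = ∑ x ∈ antidiagonal n,
          (K x.1 x.2 * p x.1 x.2 * z (x.1 + 1) x.2 + K x.1 x.2 * q x.1 x.2 * z x.1 (x.2 + 1)) := by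
  have hsplit : ∀ x ∈ antidiagonal (n + 1), K x.1 x.2 * z x.1 x.2
      = (if x.1 = 0 then 0 else K (x.1 - 1) x.2 * p (x.1 - 1) x.2) * z x.1 x.2
        + (if x.2 = 0 then 0 else K x.1 (x.2 - 1) * q x.1 (x.2 - 1)) * z x.1 x.2 := by
    intro x hx
    have hx0 : (x.1, x.2) ≠ (0, 0) := by
      rw [HasAntidiagonal.mem_antidiagonal] at hx
      simp only [ne_eq, Prod.mk.injEq]
      omega
    rw [hK x.1 x.2 hx0, add_mul]
  rw [sum_congr rfl hsplit, sum_add_distrib, Nat.sum_antidiagonal_succ,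
    Nat.sum_antidiagonal_succ', sum_add_distrib]
  simp

theorem sum_antidiagonal_mul_eq_succ_add (hK : Recursion p q K) {z l : ℕ → ℕ → R}
    (hz : ∀ k m, z k m = p k m * z (k + 1) m + q k m * z k (m + 1) + l k m) (n : ℕ) :
    ∑ x ∈ antidiagonal n, K x.1 x.2 * z x.1 x.2
      = ∑ x ∈ antidiagonal (n + 1), K x.1 x.2 * z x.1 x.2
        + ∑ x ∈ antidiagonal n, K x.1 x.2 * l x.1 x.2 := by
  rw [sum_antidiagonal_succ_mul hK, ← sum_add_distrib]
  refine sum_congr rfl fun x _ => ?_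
  rw [hz]
  simp only [mul_add, mul_assoc]

theorem eq_sum_antidiagonal_add_sum_range (hK00 : K 0 0 = 1) (hK : Recursion p q K)
    {z l : ℕ → ℕ → R}
    (hz : ∀ k m, z k m = p k m * z (k + 1) m + q k m * z k (m + 1) + l k m) (n : ℕ) :
    z 0 0 = ∑ x ∈ antidiagonal n, K x.1 x.2 * z x.1 x.2
      + ∑ i ∈ range n, ∑ x ∈ antidiagonal i, K x.1 x.2 * l x.1 x.2 := by
  induction n with
  | zero => simp [hK00]
  | succ n ih =>
    rw [ih, sum_antidiagonal_mul_eq_succ_add hK hz, sum_range_succ]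
    abel

end LatticePathWeight

theorem two_scale_functional_equation_iteration_general
    (a₀ a₁ : ℝ)
    (s₀ : ℂ) (Z h₀ h₁ L : ℂ → ℂ)
    (hrec : ∀ k m : ℕ,
      Z ((a₀ : ℂ) ^ k * (a₁ : ℂ) ^ m * s₀)
        = h₀ ((a₀ : ℂ) ^ k * (a₁ : ℂ) ^ m * s₀) * Z ((a₀ : ℂ) ^ (k + 1) * (a₁ : ℂ) ^ m * s₀)
          + h₁ ((a₀ : ℂ) ^ k * (a₁ : ℂ) ^ m * s₀) * Z ((a₀ : ℂ) ^ k * (a₁ : ℂ) ^ (m + 1) * s₀)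
          + L ((a₀ : ℂ) ^ k * (a₁ : ℂ) ^ m * s₀))
    (Kw : ℕ → ℕ → ℂ) (hK00 : Kw 0 0 = 1)
    (hKrec : ∀ k m : ℕ, (k, m) ≠ (0, 0) →
      Kw k m
        = (if k = 0 then 0
            else Kw (k - 1) m * h₀ ((a₀ : ℂ) ^ (k - 1) * (a₁ : ℂ) ^ m * s₀))
          + (if m = 0 then 0
            else Kw k (m - 1) * h₁ ((a₀ : ℂ) ^ k * (a₁ : ℂ) ^ (m - 1) * s₀))) :
    ∀ n : ℕ,
      Z s₀ = (∑ k ∈ range (n + 1), Kw k (n - k) * Z ((a₀ : ℂ) ^ k * (a₁ : ℂ) ^ (n - k) * s₀))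
        + ∑ i ∈ range n, ∑ k ∈ range (i + 1),
            Kw k (i - k) * L ((a₀ : ℂ) ^ k * (a₁ : ℂ) ^ (i - k) * s₀) := by
  intro n
  have h := LatticePathWeight.eq_sum_antidiagonal_add_sum_range
    (p := fun k m => h₀ ((a₀ : ℂ) ^ k * (a₁ : ℂ) ^ m * s₀))
    (q := fun k m => h₁ ((a₀ : ℂ) ^ k * (a₁ : ℂ) ^ m * s₀))
    (z := fun k m => Z ((a₀ : ℂ) ^ k * (a₁ : ℂ) ^ m * s₀))
    (l := fun k m => L ((a₀ : ℂ) ^ k * (a₁ : ℂ) ^ m * s₀)) hK00 hKrec hrec n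
  simpa only [pow_zero, one_mul, Nat.sum_antidiagonal_eq_sum_range_succ_mk] using h

/-- If `Z(u) = h₀(u)·Z(a₀u) + h₁(u)·Z(a₁u) + L(u)` on the orbit
`{a₀ᵏa₁ᵐs₀}`, and `K k m` are the lattice-path weights defined by `K 0 0 = 1`,
`K k m = 0` for negative indices, and
`K k m = K (k-1) m · h₀(a₀^(k-1)a₁^m s₀) + K k (m-1) · h₁(a₀^k a₁^(m-1) s₀)`
for `(k,m) ≠ (0,0)`, then for every `n ≥ 0`:
`Z(s₀) = Σ_{k=0}^n K k (n-k)·Z(a₀ᵏa₁^{n-k}s₀)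
  + Σ_{i=0}^{n-1} Σ_{k=0}^i K k (i-k)·L(a₀ᵏa₁^{i-k}s₀)`. -/
theorem two_scale_functional_equation_iteration
    (a₀ a₁ : ℝ) (ha₀ : a₀ ∈ Set.Ioo (0 : ℝ) 1) (ha₁ : a₁ ∈ Set.Ioo (0 : ℝ) 1)
    (s₀ : ℂ) (Z h₀ h₁ L : ℂ → ℂ)
    (hrec : ∀ k m : ℕ,
      Z ((a₀ : ℂ) ^ k * (a₁ : ℂ) ^ m * s₀)
        = h₀ ((a₀ : ℂ) ^ k * (a₁ : ℂ) ^ m * s₀) * Z ((a₀ : ℂ) ^ (k + 1) * (a₁ : ℂ) ^ m * s₀)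
          + h₁ ((a₀ : ℂ) ^ k * (a₁ : ℂ) ^ m * s₀) * Z ((a₀ : ℂ) ^ k * (a₁ : ℂ) ^ (m + 1) * s₀)
          + L ((a₀ : ℂ) ^ k * (a₁ : ℂ) ^ m * s₀))
    (Kw : ℕ → ℕ → ℂ) (hK00 : Kw 0 0 = 1)
    (hKrec : ∀ k m : ℕ, (k, m) ≠ (0, 0) →
      Kw k m
        = (if k = 0 then 0
            else Kw (k - 1) m * h₀ ((a₀ : ℂ) ^ (k - 1) * (a₁ : ℂ) ^ m * s₀))
          + (if m = 0 then 0
            else Kw k (m - 1) * h₁ ((a₀ : ℂ) ^ k * (a₁ : ℂ) ^ (m - 1) * s₀))) :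
    ∀ n : ℕ,
      Z s₀ = (∑ k ∈ range (n + 1), Kw k (n - k) * Z ((a₀ : ℂ) ^ k * (a₁ : ℂ) ^ (n - k) * s₀))
        + ∑ i ∈ range n, ∑ k ∈ range (i + 1),
            Kw k (i - k) * L ((a₀ : ℂ) ^ k * (a₁ : ℂ) ^ (i - k) * s₀) :=
  two_scale_functional_equation_iteration_general a₀ a₁ s₀ Z h₀ h₁ L hrec Kw hK00 hKrec
end

section
/- Let a₀, a₁ ∈ (0,1), s₀ ∈ ℂ, r ∈ [0,1), and let Z, h₀, h₁, L : ℂ → ℂ satisfy Z(u) = r·(h₀(u)·Z(a₀·u) + h₁(u)·Z(a₁·u)) + L(u) for every u ∈ {a₀^k·a₁^m·s₀ : k, m ≥ 0}. Assume |h₀(u)| + |h₁(u)| ≤ 1 for every u in this set and that Z is bounded on this set. Define K_{k,m}(s₀) by K_{0,0}(s₀) = 1, K_{k,m}(s₀) = 0 for k < 0 or m < 0, and K_{k,m}(s₀) = K_{k−1,m}(s₀)·h₀(a₀^{k−1}·a₁^m·s₀) + K_{k,m−1}(s₀)·h₁(a₀^k·a₁^{m−1}·s₀) for (k,m) ≠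 (0,0). Then (i) Σ_{k=0}^n |K_{k,n−k}(s₀)| ≤ 1 for every n ≥ 0, and (ii) the series Σ_{i=0}^∞ r^i · Σ_{k=0}^i K_{k,i−k}(s₀)·L(a₀^k·a₁^{i−k}·s₀) converges absolutely and equals Z(s₀). -/
/-!
Multiplying the functional equation at the points `a₀ᵏa₁ᵐs₀` of the `n`-th diagonal `k + m = n`
by the path weights `K k m` and summing, every lattice path is extended by one step, so
`Tₙ = r·Tₙ₊₁ + Λₙ`, where `Tₙ = Σ_{k+m=n} K k m · Z(a₀ᵏa₁ᵐs₀)` and `Λₙ` is the corresponding sum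
of values of `L`; since `T₀ = Z(s₀)`, telescoping gives `Z(s₀) = Σ_{i<N} rⁱΛᵢ + rᴺ·T_N`.
Because `|h₀| + |h₁| ≤ 1`, one step never increases the total mass `Σ_{k+m=n} |K k m|` of a
diagonal, which therefore stays `≤ 1`. Hence `|Tₙ| ≤ sup |Z|`, the remainder `rᴺ·T_N` decays
geometrically, and `Λₙ = Tₙ - r·Tₙ₊₁` is bounded, which gives absolute convergence.
-/

open Finset Filter Topology

theorem Finset.Nat.sum_antidiagonal_succ_add {M : Type*} [AddCommMonoid M] (n : ℕ)
    (A B : ℕ × ℕ → M) (hA : A (0, n + 1) = 0) (hB : B (n + 1, 0) = 0) :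
    ∑ p ∈ antidiagonal (n + 1), (A p + B p)
      = ∑ p ∈ antidiagonal n, (A (p.1 + 1, p.2) + B (p.1, p.2 + 1)) := by
  rw [sum_add_distrib, Nat.sum_antidiagonal_succ, Nat.sum_antidiagonal_succ', hA, hB,
    zero_add, zero_add, sum_add_distrib]

theorem Finset.Nat.ne_zero_of_mem_antidiagonal_succ {n : ℕ} {p : ℕ × ℕ}
    (hp : p ∈ antidiagonal (n + 1)) :
    (p.1, p.2) ≠ (0, 0) := by
  rintro h
  simp_all [HasAntidiagonal.mem_antidiagonal]

theorem norm_sum_mul_le_of_sum_norm_le_one {ι R : Type*} [SeminormedRing R] {s : Finset ι}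
    {a b : ι → R} {C : ℝ} (ha : ∑ i ∈ s, ‖a i‖ ≤ 1) (hb : ∀ i ∈ s, ‖b i‖ ≤ C) (hC : 0 ≤ C) :
    ‖∑ i ∈ s, a i * b i‖ ≤ C :=
  calc ‖∑ i ∈ s, a i * b i‖ ≤ ∑ i ∈ s, ‖a i‖ * C :=
        (norm_sum_le _ _).trans <| sum_le_sum fun i hi =>
          (norm_mul_le _ _).trans (mul_le_mul_of_nonneg_left (hb i hi) (norm_nonneg _))
    _ = (∑ i ∈ s, ‖a i‖) * C := (sum_mul _ _ _).symm
    _ ≤ C := mul_le_of_le_one_left hC ha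

section Telescoping

variable {𝕜 E : Type*}

theorem eq_sum_range_pow_smul_add_pow_smul [Semiring 𝕜] [AddCommMonoid E] [Module 𝕜 E]
    {c : 𝕜} {T u : ℕ → E} (hT : ∀ n, T n = c • T (n + 1) + u n) (N : ℕ) :
    T 0 = ∑ i ∈ range N, c ^ i • u i + c ^ N • T N := by
  induction N with
  | zero => simp
  | succ N ih =>
    rw [ih, hT N, sum_range_succ, smul_add, smul_smul, ← pow_succ]
    abel

theorem hasSum_pow_smul_of_eq_smul_succ_add [NormedField 𝕜] [SeminormedAddCommGroup E]
    [NormedSpace 𝕜 E] {c : 𝕜} (hc : ‖c‖ < 1) {T u : ℕ → E}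
    (hT : ∀ n, T n = c • T (n + 1) + u n) {C : ℝ} (hC : ∀ n, ‖T n‖ ≤ C) :
    Summable (fun n => ‖c ^ n • u n‖) ∧ HasSum (fun n => c ^ n • u n) (T 0) := by
  have hC0 : 0 ≤ C := (norm_nonneg _).trans (hC 0)
  have hu : ∀ n, ‖u n‖ ≤ 2 * C := fun n =>
    calc ‖u n‖ = ‖T n - c • T (n + 1)‖ := by rw [hT n, add_sub_cancel_left]
      _ ≤ ‖T n‖ + ‖c‖ * ‖T (n + 1)‖ := (norm_sub_le _ _).trans_eq (by rw [norm_smul])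
      _ ≤ C + 1 * C := add_le_add (hC n) (mul_le_mul hc.le (hC _) (norm_nonneg _) zero_le_one)
      _ = 2 * C := by ring
  have hsum : Summable (fun n => ‖c ^ n • u n‖) := by
    refine .of_nonneg_of_le (fun _ => norm_nonneg _) (fun n => ?_)
      ((summable_geometric_of_lt_one (norm_nonneg c) hc).mul_left (2 * C))
    rw [norm_smul, norm_pow, mul_comm]
    exact mul_le_mul_of_nonneg_right (hu n) (by positivity)
  have hrem : Tendsto (fun N => c ^ N • T N) atTop (𝓝 0) := by
    refine squeeze_zero_norm (a := fun N => C * ‖c‖ ^ N) (fun N => ?_) ?_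
    · rw [norm_smul, norm_pow, mul_comm]
      exact mul_le_mul_of_nonneg_right (hC N) (by positivity)
    · simpa using (tendsto_pow_atTop_nhds_zero_of_lt_one (norm_nonneg c) hc).const_mul C
  refine ⟨hsum, (hasSum_iff_tendsto_nat_of_summable_norm hsum).2 ?_⟩
  have hlim := (tendsto_const_nhds (x := T 0)).sub hrem
  rw [sub_zero] at hlim
  refine hlim.congr fun N => ?_
  rw [eq_sum_range_pow_smul_add_pow_smul hT N, add_sub_cancel_right]

end Telescoping

section LatticePaths

variable {R : Type*}

/-- With `K 0 0 = 1`, `K k m` is the total weight of the lattice paths from `(0, 0)` to `(k, m)`,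
a unit step to the right from `(i, j)` having weight `f i j` and one upwards weight `g i j`. -/
def LatticePathRecursion [NonUnitalNonAssocSemiring R] (f g K : ℕ → ℕ → R) : Prop :=
  ∀ k m, (k, m) ≠ (0, 0) →
    K k m = (if k = 0 then 0 else K (k - 1) m * f (k - 1) m)
      + (if m = 0 then 0 else K k (m - 1) * g k (m - 1))

variable {f g K : ℕ → ℕ → R}

theorem LatticePathRecursion.sum_antidiagonal_succ_mul [CommSemiring R]
    (hK : LatticePathRecursion f g K) (F : ℕ → ℕ → R) (n : ℕ) :
    ∑ p ∈ antidiagonal (n + 1), K p.1 p.2 * F p.1 p.2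
      = ∑ p ∈ antidiagonal n,
          K p.1 p.2 * (f p.1 p.2 * F (p.1 + 1) p.2 + g p.1 p.2 * F p.1 (p.2 + 1)) := by
  have hsplit : ∀ p ∈ antidiagonal (n + 1), K p.1 p.2 * F p.1 p.2
      = (if p.1 = 0 then 0 else K (p.1 - 1) p.2 * f (p.1 - 1) p.2 * F p.1 p.2)
        + (if p.2 = 0 then 0 else K p.1 (p.2 - 1) * g p.1 (p.2 - 1) * F p.1 p.2) := by
    intro p hp
    simp only [hK p.1 p.2 (Nat.ne_zero_of_mem_antidiagonal_succ hp), add_mul, ite_mul, zero_mul]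
  rw [sum_congr rfl hsplit, Nat.sum_antidiagonal_succ_add n _ _ (by simp) (by simp)]
  refine sum_congr rfl fun p _ => ?_
  simp only [Nat.add_one_ne_zero, if_false, Nat.add_sub_cancel]
  ring

theorem LatticePathRecursion.sum_antidiagonal_succ_norm_le [SeminormedRing R]
    (hK : LatticePathRecursion f g K) (n : ℕ) :
    ∑ p ∈ antidiagonal (n + 1), ‖K p.1 p.2‖
      ≤ ∑ p ∈ antidiagonal n, ‖K p.1 p.2‖ * (‖f p.1 p.2‖ + ‖g p.1 p.2‖) :=
  calc ∑ p ∈ antidiagonal (n + 1), ‖K p.1 p.2‖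
      ≤ ∑ p ∈ antidiagonal (n + 1),
          ((if p.1 = 0 then 0 else ‖K (p.1 - 1) p.2‖ * ‖f (p.1 - 1) p.2‖)
            + (if p.2 = 0 then 0 else ‖K p.1 (p.2 - 1)‖ * ‖g p.1 (p.2 - 1)‖)) := by
        refine sum_le_sum fun p hp => ?_
        rw [hK p.1 p.2 (Nat.ne_zero_of_mem_antidiagonal_succ hp)]
        refine (norm_add_le _ _).trans (add_le_add ?_ ?_) <;>
          split_ifs <;> simp [norm_mul_le]
    _ = ∑ p ∈ antidiagonal n, ‖K p.1 p.2‖ * (‖f p.1 p.2‖ + ‖g p.1 p.2‖) := by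
        rw [Nat.sum_antidiagonal_succ_add n _ _ (by simp) (by simp)]
        simp [mul_add]

theorem LatticePathRecursion.sum_antidiagonal_norm_le_one [SeminormedRing R]
    (hK : LatticePathRecursion f g K) (h00 : ‖K 0 0‖ ≤ 1)
    (hfg : ∀ k m, ‖f k m‖ + ‖g k m‖ ≤ 1) (n : ℕ) :
    ∑ p ∈ antidiagonal n, ‖K p.1 p.2‖ ≤ 1 := by
  induction n with
  | zero => simpa using h00
  | succ n ih =>
    refine (hK.sum_antidiagonal_succ_norm_le n).trans <| le_trans ?_ ih
    exact sum_le_sum fun p _ => mul_le_of_le_one_right (norm_nonneg _) (hfg p.1 p.2)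

theorem LatticePathRecursion.sum_antidiagonal_eq_mul_succ_add [CommSemiring R]
    (hK : LatticePathRecursion f g K) {r : R} {z l : ℕ → ℕ → R}
    (hz : ∀ k m, z k m = r * (f k m * z (k + 1) m + g k m * z k (m + 1)) + l k m) (n : ℕ) :
    ∑ p ∈ antidiagonal n, K p.1 p.2 * z p.1 p.2
      = r * ∑ p ∈ antidiagonal (n + 1), K p.1 p.2 * z p.1 p.2
        + ∑ p ∈ antidiagonal n, K p.1 p.2 * l p.1 p.2 := by
  rw [hK.sum_antidiagonal_succ_mul z n, mul_sum, ← sum_add_distrib]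
  refine sum_congr rfl fun p _ => ?_
  rw [hz p.1 p.2]
  ring

end LatticePaths

theorem two_scale_functional_equation_solution_general
    (a₀ a₁ : ℝ)
    (s₀ : ℂ) (r : ℝ) (hr : r ∈ Set.Ico (0 : ℝ) 1) (Z h₀ h₁ L : ℂ → ℂ)
    (hrec : ∀ k m : ℕ,
      Z ((a₀ : ℂ) ^ k * (a₁ : ℂ) ^ m * s₀)
        = (r : ℂ) * (h₀ ((a₀ : ℂ) ^ k * (a₁ : ℂ) ^ m * s₀)
              * Z ((a₀ : ℂ) ^ (k + 1) * (a₁ : ℂ) ^ m * s₀)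
            + h₁ ((a₀ : ℂ) ^ k * (a₁ : ℂ) ^ m * s₀)
              * Z ((a₀ : ℂ) ^ k * (a₁ : ℂ) ^ (m + 1) * s₀))
          + L ((a₀ : ℂ) ^ k * (a₁ : ℂ) ^ m * s₀))
    (hh : ∀ k m : ℕ,
      ‖h₀ ((a₀ : ℂ) ^ k * (a₁ : ℂ) ^ m * s₀)‖ + ‖h₁ ((a₀ : ℂ) ^ k * (a₁ : ℂ) ^ m * s₀)‖ ≤ 1)
    (hZbd : ∃ C, ∀ k m : ℕ, ‖Z ((a₀ : ℂ) ^ k * (a₁ : ℂ) ^ m * s₀)‖ ≤ C)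
    (Kw : ℕ → ℕ → ℂ) (hK00 : Kw 0 0 = 1)
    (hKrec : ∀ k m : ℕ, (k, m) ≠ (0, 0) →
      Kw k m
        = (if k = 0 then 0
            else Kw (k - 1) m * h₀ ((a₀ : ℂ) ^ (k - 1) * (a₁ : ℂ) ^ m * s₀))
          + (if m = 0 then 0
            else Kw k (m - 1) * h₁ ((a₀ : ℂ) ^ k * (a₁ : ℂ) ^ (m - 1) * s₀))) :
    (∀ n : ℕ, ∑ k ∈ range (n + 1), ‖Kw k (n - k)‖ ≤ 1) ∧
      Summable (fun i : ℕ => ‖(r : ℂ) ^ i * ∑ k ∈ range (i + 1),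
          Kw k (i - k) * L ((a₀ : ℂ) ^ k * (a₁ : ℂ) ^ (i - k) * s₀)‖) ∧
      HasSum (fun i : ℕ => (r : ℂ) ^ i * ∑ k ∈ range (i + 1),
          Kw k (i - k) * L ((a₀ : ℂ) ^ k * (a₁ : ℂ) ^ (i - k) * s₀)) (Z s₀) := by
  have hK : LatticePathRecursion (fun k m => h₀ ((a₀ : ℂ) ^ k * (a₁ : ℂ) ^ m * s₀))
      (fun k m => h₁ ((a₀ : ℂ) ^ k * (a₁ : ℂ) ^ m * s₀)) Kw := hKrec
  have hmass := hK.sum_antidiagonal_norm_le_one (by simp [hK00]) hh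
  obtain ⟨C, hC⟩ := hZbd
  have hr1 : ‖(r : ℂ)‖ < 1 := by simpa [abs_of_nonneg hr.1] using hr.2
  obtain ⟨hsumm, hsum⟩ := hasSum_pow_smul_of_eq_smul_succ_add hr1
    (hK.sum_antidiagonal_eq_mul_succ_add hrec)
    (fun n => norm_sum_mul_le_of_sum_norm_le_one (hmass n) (fun p _ => hC p.1 p.2)
      ((norm_nonneg _).trans (hC 0 0)))
  simp only [Nat.sum_antidiagonal_eq_sum_range_succ fun k m => ‖Kw k m‖,
    Nat.sum_antidiagonal_eq_sum_range_succ fun k m =>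
      Kw k m * L ((a₀ : ℂ) ^ k * (a₁ : ℂ) ^ m * s₀),
    smul_eq_mul] at hmass hsumm hsum
  exact ⟨hmass, hsumm, by simpa [hK00] using hsum⟩

/-- If `Z(u) = r·(h₀(u)·Z(a₀u) + h₁(u)·Z(a₁u)) + L(u)` on the orbit
`{a₀ᵏa₁ᵐs₀}`, with `|h₀(u)| + |h₁(u)| ≤ 1` on this set, `Z` bounded on this set,
`0 ≤ r < 1`, and `K k m` the lattice-path weights, then
(i) `Σ_{k=0}^n |K k (n-k)| ≤ 1` for every `n`, and
(ii) the series `Σᵢ rⁱ·Σ_{k=0}^i K k (i-k)·L(a₀ᵏa₁^{i-k}s₀)` converges absolutely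
with sum `Z(s₀)`. -/
theorem two_scale_functional_equation_solution
    (a₀ a₁ : ℝ) (ha₀ : a₀ ∈ Set.Ioo (0 : ℝ) 1) (ha₁ : a₁ ∈ Set.Ioo (0 : ℝ) 1)
    (s₀ : ℂ) (r : ℝ) (hr : r ∈ Set.Ico (0 : ℝ) 1) (Z h₀ h₁ L : ℂ → ℂ)
    (hrec : ∀ k m : ℕ,
      Z ((a₀ : ℂ) ^ k * (a₁ : ℂ) ^ m * s₀)
        = (r : ℂ) * (h₀ ((a₀ : ℂ) ^ k * (a₁ : ℂ) ^ m * s₀)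
              * Z ((a₀ : ℂ) ^ (k + 1) * (a₁ : ℂ) ^ m * s₀)
            + h₁ ((a₀ : ℂ) ^ k * (a₁ : ℂ) ^ m * s₀)
              * Z ((a₀ : ℂ) ^ k * (a₁ : ℂ) ^ (m + 1) * s₀))
          + L ((a₀ : ℂ) ^ k * (a₁ : ℂ) ^ m * s₀))
    (hh : ∀ k m : ℕ,
      ‖h₀ ((a₀ : ℂ) ^ k * (a₁ : ℂ) ^ m * s₀)‖ + ‖h₁ ((a₀ : ℂ) ^ k * (a₁ : ℂ) ^ m * s₀)‖ ≤ 1)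
    (hZbd : ∃ C, ∀ k m : ℕ, ‖Z ((a₀ : ℂ) ^ k * (a₁ : ℂ) ^ m * s₀)‖ ≤ C)
    (Kw : ℕ → ℕ → ℂ) (hK00 : Kw 0 0 = 1)
    (hKrec : ∀ k m : ℕ, (k, m) ≠ (0, 0) →
      Kw k m
        = (if k = 0 then 0
            else Kw (k - 1) m * h₀ ((a₀ : ℂ) ^ (k - 1) * (a₁ : ℂ) ^ m * s₀))
          + (if m = 0 then 0
            else Kw k (m - 1) * h₁ ((a₀ : ℂ) ^ k * (a₁ : ℂ) ^ (m - 1) * s₀))) :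
    (∀ n : ℕ, ∑ k ∈ range (n + 1), ‖Kw k (n - k)‖ ≤ 1) ∧
      Summable (fun i : ℕ => ‖(r : ℂ) ^ i * ∑ k ∈ range (i + 1),
          Kw k (i - k) * L ((a₀ : ℂ) ^ k * (a₁ : ℂ) ^ (i - k) * s₀)‖) ∧
      HasSum (fun i : ℕ => (r : ℂ) ^ i * ∑ k ∈ range (i + 1),
          Kw k (i - k) * L ((a₀ : ℂ) ^ k * (a₁ : ℂ) ^ (i - k) * s₀)) (Z s₀) :=
  two_scale_functional_equation_solution_general a₀ a₁ s₀ r hr Z h₀ h₁ L hrec hh hZbd Kw hK00 hKrec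
end

section
/- Let W be a nonnegative random variable and B exponentially distributed with rate μ > 0, with W and B independent, let a > 0 be real, and write Z(y) = E[exp(−y·W)]. Then for every real s ≥ 0, E[exp(−s·(W + max(B − a·W, 0)))] = Z(s) − (s/(μ + s))·Z(s + a·μ). -/
/-!
Condition on `W` and integrate out the independent exponential `B`, splitting at `c = a·W`.
Below `c` the integrand `exp (-s·max (B - c) 0)` equals `1`, contributing
`P(B ≤ c) = 1 - e^{-μc}`; above `c` it contributes
`∫_c^∞ μ e^{-μx} e^{-s(x-c)} dx = μ/(μ+s) · e^{-μc}`. So the conditional expectation is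
`e^{-sW} (1 - s/(μ+s) · e^{-μaW})`, whose expectation is the right-hand side.
-/

open MeasureTheory ProbabilityTheory Real Set

lemma integrable_exp_of_ae_nonpos {α : Type*} [MeasurableSpace α] {P : Measure α}
    [IsFiniteMeasure P] {f : α → ℝ} (hf : AEMeasurable f P) (hf0 : ∀ᵐ x ∂P, f x ≤ 0) :
    Integrable (fun x => exp (f x)) P :=
  .of_bound (measurable_exp.comp_aemeasurable hf).aestronglyMeasurable 1
    (hf0.mono fun x hx => by simpa [abs_exp] using hx)

theorem ProbabilityTheory.IndepFun.integral_comp_eq_integral_integral_map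
    {Ω α β E : Type*} [MeasurableSpace Ω] [MeasurableSpace α] [MeasurableSpace β]
    [NormedAddCommGroup E] [NormedSpace ℝ E]
    {P : Measure Ω} [IsFiniteMeasure P] {X : Ω → α} {Y : Ω → β} (hXY : IndepFun X Y P)
    (hX : AEMeasurable X P) (hY : AEMeasurable Y P) {F : α × β → E}
    (hF : AEStronglyMeasurable F ((P.map X).prod (P.map Y)))
    (hint : Integrable (fun ω => F (X ω, Y ω)) P) :
    ∫ ω, F (X ω, Y ω) ∂P = ∫ ω, ∫ y, F (X ω, y) ∂(P.map Y) ∂P := by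
  have hlaw := hXY.map_prod_eq_prod_map_map hX hY
  have hpair : AEMeasurable (fun ω => (X ω, Y ω)) P := hX.prodMk hY
  have hF' : AEStronglyMeasurable F (P.map fun ω => (X ω, Y ω)) := hlaw ▸ hF
  have hF_int : Integrable F ((P.map X).prod (P.map Y)) :=
    hlaw ▸ (integrable_map_measure hF' hpair).mpr hint
  rw [← integral_map hpair hF', hlaw, integral_prod F hF_int,
    integral_map hX hF.integral_prod_right']

lemma setIntegral_expMeasure_Ioi {μ c : ℝ} (hμ : 0 ≤ μ) (hc : 0 ≤ c) (g : ℝ → ℝ) :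
    ∫ x in Ioi c, g x ∂expMeasure μ = ∫ x in Ioi c, μ * exp (-(μ * x)) * g x := by
  have hpdf : Measurable (exponentialPDF μ) := (measurable_exponentialPDFReal μ).ennreal_ofReal
  rw [show expMeasure μ = volume.withDensity (exponentialPDF μ) from rfl,
    setIntegral_withDensity_eq_setIntegral_toReal_smul' _ hpdf
      (ae_of_all _ fun _ => ENNReal.ofReal_lt_top)]
  refine setIntegral_congr_fun measurableSet_Ioi fun x hx => ?_
  rw [exponentialPDF_of_nonneg (hc.trans (le_of_lt hx)), ENNReal.toReal_ofReal (by positivity),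
    smul_eq_mul]

lemma integral_exp_neg_mul_max_sub_expMeasure {μ s c : ℝ} (hμ : 0 < μ) (hs : 0 ≤ s)
    (hc : 0 ≤ c) :
    ∫ b, exp (-s * max (b - c) 0) ∂expMeasure μ = 1 - s / (μ + s) * exp (-(μ * c)) := by
  have := isProbabilityMeasure_expMeasure hμ
  have hint : Integrable (fun b => exp (-s * max (b - c) 0)) (expMeasure μ) :=
    integrable_exp_of_ae_nonpos (by fun_prop)
      (ae_of_all _ fun b => mul_nonpos_of_nonpos_of_nonneg (neg_nonpos.2 hs) (le_max_right _ _))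
  have below : ∫ b in Iic c, exp (-s * max (b - c) 0) ∂expMeasure μ = 1 - exp (-(μ * c)) := by
    rw [setIntegral_congr_fun measurableSet_Iic (g := fun _ => (1 : ℝ))
        fun b hb => by simp [max_eq_right (sub_nonpos.2 (mem_Iic.1 hb))],
      setIntegral_const, smul_eq_mul, mul_one, ← cdf_eq_real, cdf_expMeasure_eq hμ, if_pos hc]
  have above : ∫ b in Ioi c, exp (-s * max (b - c) 0) ∂expMeasure μ
      = μ / (μ + s) * exp (-(μ * c)) := by
    rw [setIntegral_expMeasure_Ioi hμ.le hc]
    calc _ = ∫ x in Ioi c, μ * exp (s * c) * exp (-(μ + s) * x) :=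
          setIntegral_congr_fun measurableSet_Ioi fun x hx => by
            simp only [max_eq_left (sub_nonneg.2 (le_of_lt (mem_Ioi.1 hx)))]
            rw [mul_assoc, mul_assoc, ← exp_add, ← exp_add]
            ring_nf
      _ = μ * exp (s * c) * (exp (-(μ + s) * c) / (μ + s)) := by
          rw [integral_const_mul, integral_exp_mul_Ioi (by linarith), neg_div_neg_eq]
      _ = _ := by
          rw [show -(μ * c) = s * c + -(μ + s) * c by ring, exp_add]
          ring
  rw [← integral_add_compl measurableSet_Iic hint, compl_Iic, below, above]
  field_simp
  ring

/-- If `W` is a nonnegative random variable and `B` is exponential with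
rate `μ > 0`, independent of `W`, and `a > 0`, then for every `s ≥ 0`,
`E[exp(-s·(W + max(B - a·W, 0)))] = Z(s) - (s/(μ+s))·Z(s + a·μ)`,
where `Z(y) = E[exp(-y·W)]`. -/
theorem lst_sojourn_with_truncated_service
    {Ω : Type*} [MeasurableSpace Ω] (P : Measure Ω) [IsProbabilityMeasure P]
    (W B : Ω → ℝ) (hWm : Measurable W) (hBm : Measurable B)
    (hWnonneg : ∀ ω, 0 ≤ W ω)
    (μ : ℝ) (hμ : 0 < μ)
    (hBlaw : Measure.map B P = expMeasure μ)
    (hindep : IndepFun W B P)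
    (a : ℝ) (ha : 0 < a)
    (s : ℝ) (hs : 0 ≤ s) :
    ∫ ω, Real.exp (-s * (W ω + max (B ω - a * W ω) 0)) ∂P
      = (∫ ω, Real.exp (-s * W ω) ∂P)
        - (s / (μ + s)) * ∫ ω, Real.exp (-(s + a * μ) * W ω) ∂P := by
  have hZ_int : ∀ t, 0 ≤ t → Integrable (fun ω => exp (-t * W ω)) P := fun t ht =>
    integrable_exp_of_ae_nonpos (by fun_prop)
      (ae_of_all _ fun ω => mul_nonpos_of_nonpos_of_nonneg (neg_nonpos.2 ht) (hWnonneg ω))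
  have hinner : ∀ ω, ∫ b, exp (-s * (W ω + max (b - a * W ω) 0)) ∂expMeasure μ
      = exp (-s * W ω) - s / (μ + s) * exp (-(s + a * μ) * W ω) := fun ω => by
    simp only [mul_add, exp_add]
    rw [integral_const_mul,
      integral_exp_neg_mul_max_sub_expMeasure hμ hs (mul_nonneg ha.le (hWnonneg ω)),
      show -(s + a * μ) * W ω = -s * W ω + -(μ * (a * W ω)) by ring, exp_add]
    ring
  calc ∫ ω, exp (-s * (W ω + max (B ω - a * W ω) 0)) ∂P
      = ∫ ω, ∫ b, exp (-s * (W ω + max (b - a * W ω) 0)) ∂expMeasure μ ∂P := by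
        rw [← hBlaw]
        exact hindep.integral_comp_eq_integral_integral_map
          (F := fun p => exp (-s * (p.1 + max (p.2 - a * p.1) 0)))
          hWm.aemeasurable hBm.aemeasurable (by fun_prop)
          (integrable_exp_of_ae_nonpos (by fun_prop) (ae_of_all _ fun ω =>
            mul_nonpos_of_nonpos_of_nonneg (neg_nonpos.2 hs)
              (add_nonneg (hWnonneg ω) (le_max_right _ _))))
    _ = _ := by
        simp only [hinner]
        rw [integral_sub (hZ_int s hs) ((hZ_int _ (by positivity)).const_mul _),
          integral_const_mul]
end

section
/- Let a ∈ (0,1), δ > 0, let p_1,…,p_K ≥ 0 with Σ_i p_i = 1 and β̄_1,…,β̄_K ∈ (0,1), let φ_B : [0,∞) → ℝ, and let Z : [0,∞) → ℝ be bounded, continuous at 0 with Z(0) = 1, satisfying (δ − s)·Z(s) = δ·(Σ_{i=1}^K p_i·φ_B(s·β̄_i))·Z(a·s) − s·Z(a·δ)·Σ_{i=1}^K p_i·φ_B(δ·β̄_i) for every s ≥ 0 with s ≠ δ·a^{−n} for all integers n ≥ 0. Assume the infinite product Π := ∏_{j=0}^∞ ( Σ_{i=1}^K p_i·φ_B(a^{j+1}·δ·β̄_i）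 / (1 − a^{j+1}) ) converges and the series S := Σ_{n=0}^∞ ( a^{n+1}/(1 − a^{n+1}) ) · ∏_{j=0}^{n−1} ( Σ_{i=1}^K p_i·φ_B(a^{j+1}·δ·β̄_i) / (1 − a^{j+1}) ) converges. Then Z(a·δ)·( 1 + (Σ_{i=1}^K p_i·φ_B(δ·β̄_i))·S ) = Π. -/
/-!
Evaluating the functional equation at the points `s = aⁿ⁺¹·δ`, which all lie below `δ` and so
avoid the excluded points `δ·a⁻ᵐ`, expresses `Z(aⁿ⁺¹δ)` through `Z(aⁿ⁺²δ)`. Iterating this first-order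
recurrence from `Z(aδ)` gives `Z(aδ)·(1 + D·S_N) = Π_N·Z(a^{N+1}δ)` for the partial sums and
products, where `D = Σᵢ pᵢ·φ_B(δ·β̄ᵢ)`, and letting `N → ∞` uses `a^{N+1}δ → 0` and `Z(0) = 1`.
-/

open Filter Finset Topology

theorem add_sum_mul_prod_eq_prod_mul {R : Type*} [CommRing R] {z c w : ℕ → R}
    (h : ∀ n, z n = c n * z (n + 1) - w n) (N : ℕ) :
    z 0 + ∑ n ∈ range N, w n * ∏ j ∈ range n, c j = (∏ j ∈ range N, c j) * z N := by
  induction N with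
  | zero => simp
  | succ N ih =>
    rw [sum_range_succ, prod_range_succ, ← add_assoc, ih, h N]
    ring

theorem add_eq_of_tendsto_prod_of_tendsto_sum {R : Type*} [CommRing R] [TopologicalSpace R]
    [IsTopologicalRing R] [T2Space R] {z c w : ℕ → R} {P S : R}
    (h : ∀ n, z n = c n * z (n + 1) - w n)
    (hP : Tendsto (fun N => ∏ j ∈ range N, c j) atTop (𝓝 P))
    (hz : Tendsto z atTop (𝓝 1))
    (hS : Tendsto (fun N => ∑ n ∈ range N, w n * ∏ j ∈ range n, c j) atTop (𝓝 S)) :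
    z 0 + S = P := by
  have hlim := (hP.mul hz).congr fun N => (add_sum_mul_prod_eq_prod_mul h N).symm
  rw [mul_one] at hlim
  exact tendsto_nhds_unique (tendsto_const_nhds.add hS) hlim

theorem pow_succ_mul_ne_div_pow {a δ : ℝ} (ha0 : 0 < a) (ha1 : a < 1) (hδ : 0 < δ) (n m : ℕ) :
    a ^ (n + 1) * δ ≠ δ / a ^ m :=
  ne_of_lt <| lt_of_lt_of_le (b := δ)
    (mul_lt_of_lt_one_left hδ (pow_lt_one₀ ha0.le ha1 n.succ_ne_zero))
    (le_div_self hδ.le (pow_pos ha0 m) (pow_le_one₀ ha0.le ha1.le))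

theorem eq_mul_sub_of_functional_eq {a δ E : ℝ} {φ Z : ℝ → ℝ} (ha0 : 0 < a) (ha1 : a < 1)
    (hδ : 0 < δ)
    (hfe : ∀ s : ℝ, 0 ≤ s → (∀ n : ℕ, s ≠ δ / a ^ n) →
      (δ - s) * Z s = δ * φ s * Z (a * s) - s * E) (n : ℕ) :
    Z (a ^ (n + 1) * δ) = φ (a ^ (n + 1) * δ) / (1 - a ^ (n + 1)) * Z (a ^ (n + 1 + 1) * δ)
      - a ^ (n + 1) / (1 - a ^ (n + 1)) * E := by
  have hpow : 1 - a ^ (n + 1) ≠ 0 := (sub_pos.2 (pow_lt_one₀ ha0.le ha1 n.succ_ne_zero)).ne'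
  have h := hfe _ (by positivity) (pow_succ_mul_ne_div_pow ha0 ha1 hδ n)
  rw [show a * (a ^ (n + 1) * δ) = a ^ (n + 1 + 1) * δ by ring] at h
  rw [div_mul_eq_mul_div, div_mul_eq_mul_div, ← sub_div, eq_div_iff hpow]
  apply mul_left_cancel₀ hδ.ne'
  linear_combination h

theorem stationary_atom_equation_general
    (a : ℝ) (ha : a ∈ Set.Ioo (0 : ℝ) 1) (δ : ℝ) (hδ : 0 < δ)
    (K : ℕ) (p βb : Fin K → ℝ)
    (φB Z : ℝ → ℝ)
    (hZcont : ContinuousAt Z 0) (hZ0 : Z 0 = 1)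
    (hfe : ∀ s : ℝ, 0 ≤ s → (∀ n : ℕ, s ≠ δ / a ^ n) →
      (δ - s) * Z s
        = δ * (∑ i, p i * φB (s * βb i)) * Z (a * s)
          - s * Z (a * δ) * ∑ i, p i * φB (δ * βb i))
    (Pi S : ℝ)
    (hPi : Tendsto
      (fun N => ∏ j ∈ range N, (∑ i, p i * φB (a ^ (j + 1) * δ * βb i)) / (1 - a ^ (j + 1)))
      atTop (nhds Pi))
    (hS : Tendsto
      (fun N => ∑ n ∈ range N, (a ^ (n + 1) / (1 - a ^ (n + 1)))
        * ∏ j ∈ range n, (∑ i, p i * φB (a ^ (j + 1) * δ * βb i)) / (1 - a ^ (j + 1)))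
      atTop (nhds S)) :
    Z (a * δ) * (1 + (∑ i, p i * φB (δ * βb i)) * S) = Pi := by
  obtain ⟨ha0, ha1⟩ := ha
  set E := Z (a * δ) * ∑ i, p i * φB (δ * βb i)
  have hrec := eq_mul_sub_of_functional_eq (φ := fun s => ∑ i, p i * φB (s * βb i)) (E := E)
    ha0 ha1 hδ fun s hs hsne => by rw [hfe s hs hsne, mul_assoc s]
  have hz : Tendsto (fun n : ℕ => Z (a ^ (n + 1) * δ)) atTop (𝓝 1) := by
    have hpow := (tendsto_pow_atTop_nhds_zero_of_lt_one ha0.le ha1).comp (tendsto_add_atTop_nat 1)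
    rw [← hZ0]
    exact hZcont.tendsto.comp (by simpa using hpow.mul_const δ)
  have hES := hS.mul_const E
  simp only [sum_mul, mul_right_comm _ _ E] at hES
  have key := add_eq_of_tendsto_prod_of_tendsto_sum hrec hPi hz hES
  rw [zero_add, pow_one] at key
  linear_combination key

/-- Determination of `Z(a·δ)` for the stationary transform equation of
the queue `W_{n+1} = max(a·W_n + (1-G_n)·B_n - J_n, 0)`: if `Z` is bounded on `[0,∞)`,
continuous at `0` with `Z(0) = 1`, and satisfies
`(δ-s)·Z(s) = δ·(Σᵢ pᵢ·φ_B(s·β̄ᵢ))·Z(a·s) - s·Z(a·δ)·Σᵢ pᵢ·φ_B(δ·β̄ᵢ)`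
for every `s ≥ 0` avoiding the points `δ·a⁻ⁿ`, and if the infinite product
`Π = ∏ⱼ (Σᵢ pᵢ·φ_B(a^{j+1}·δ·β̄ᵢ))/(1-a^{j+1})` and the series
`S = Σₙ (a^{n+1}/(1-a^{n+1}))·∏_{j<n} (Σᵢ pᵢ·φ_B(a^{j+1}·δ·β̄ᵢ))/(1-a^{j+1})` converge,
then `Z(a·δ)·(1 + (Σᵢ pᵢ·φ_B(δ·β̄ᵢ))·S) = Π`. -/
theorem stationary_atom_equation
    (a : ℝ) (ha : a ∈ Set.Ioo (0 : ℝ) 1) (δ : ℝ) (hδ : 0 < δ)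
    (K : ℕ) (p βb : Fin K → ℝ) (hp : ∀ i, 0 ≤ p i) (hpsum : ∑ i, p i = 1)
    (hβb : ∀ i, βb i ∈ Set.Ioo (0 : ℝ) 1)
    (φB Z : ℝ → ℝ)
    (hZbd : ∃ C, ∀ s : ℝ, 0 ≤ s → |Z s| ≤ C)
    (hZcont : ContinuousAt Z 0) (hZ0 : Z 0 = 1)
    (hfe : ∀ s : ℝ, 0 ≤ s → (∀ n : ℕ, s ≠ δ / a ^ n) →
      (δ - s) * Z s
        = δ * (∑ i, p i * φB (s * βb i)) * Z (a * s)
          - s * Z (a * δ) * ∑ i, p i * φB (δ * βb i))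
    (Pi S : ℝ)
    (hPi : Tendsto
      (fun N => ∏ j ∈ range N, (∑ i, p i * φB (a ^ (j + 1) * δ * βb i)) / (1 - a ^ (j + 1)))
      atTop (nhds Pi))
    (hS : Tendsto
      (fun N => ∑ n ∈ range N, (a ^ (n + 1) / (1 - a ^ (n + 1)))
        * ∏ j ∈ range n, (∑ i, p i * φB (a ^ (j + 1) * δ * βb i)) / (1 - a ^ (j + 1)))
      atTop (nhds S)) :
    Z (a * δ) * (1 + (∑ i, p i * φB (δ * βb i)) * S) = Pi :=
  stationary_atom_equation_general a ha δ hδ K p βb φB Z hZcont hZ0 hfe Pi S hPi hS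
end
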